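/- The matrix V₀ = Re J + √(G⁻¹) |√G (Im J) √G| √(G⁻¹) is a real symmetric matrix satisfying V₀ ≥ J in the Loewner order of complex Hermitian matrices, and Tr(G V₀) = Tr(G·Re J) + Tr|√G (Im J) √G|. -/

import Mathlib

/-!
Write `J = Re J + i Im J` and `s = √G`. The matrix `H = s (i Im J) s` is Hermitian with
`|H| = |s (Im J) s|`, and `|H| - H = 2 H⁻ ≥ 0`; since `√(G⁻¹) = s⁻¹`, conjugating by `s⁻¹`
gives `V₀ - J = s⁻¹ (|H| - H) s⁻¹ ≥ 0`. Entrywise conjugation fixes the real matrix `G` and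
maps positive square roots to positive square roots, so by uniqueness `s`, `s⁻¹` and
`|s (Im J) s|` are real. The trace identity is `Tr (s s s⁻¹ X s⁻¹) = Tr (s X s⁻¹) = Tr X`.
-/

open Matrix
open scoped ComplexOrder
noncomputable section

def Matrix.PosSemidef.sqrt {n 𝕜 : Type*} [Fintype n] [DecidableEq n] [RCLike 𝕜]
    {A : Matrix n n 𝕜} (hA : A.PosSemidef) : Matrix n n 𝕜 :=
  (hA.1.eigenvectorUnitary : Matrix n n 𝕜) * diagonal ((↑) ∘ (√·) ∘ hA.1.eigenvalues) *
    (star hA.1.eigenvectorUnitary : Matrix n n 𝕜)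

def reM {m n : Type*} (J : Matrix m n ℂ) : Matrix m n ℂ := fun i j => ((J i j).re : ℂ)

def imM {m n : Type*} (J : Matrix m n ℂ) : Matrix m n ℂ := fun i j => ((J i j).im : ℂ)

def IsRealMat {m n : Type*} (A : Matrix m n ℂ) : Prop := ∀ i j, (A i j).im = 0

/-- Matrix absolute value `|A| = √(Aᴴ A)`. -/
def matAbs {n : Type*} [Fintype n] [DecidableEq n] (A : Matrix n n ℂ) : Matrix n n ℂ :=
  (Matrix.posSemidef_conjTranspose_mul_self A).sqrt

section MatrixOrder

open scoped MatrixOrder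

variable {n : Type*} [Fintype n] [DecidableEq n]

lemma Matrix.PosSemidef.sqrt_eq_cfcSqrt {𝕜 : Type*} [RCLike 𝕜] {A : Matrix n n 𝕜}
    (hA : A.PosSemidef) : hA.sqrt = CFC.sqrt A := by
  rw [CFC.sqrt_eq_cfc, cfc_nnreal_eq_real _ A hA.nonneg, hA.1.cfc_eq]
  simp only [IsHermitian.cfc, Unitary.conjStarAlgAut_apply, Matrix.PosSemidef.sqrt]
  congr 3
  funext i
  simp [max_eq_left (hA.eigenvalues_nonneg i)]

lemma Matrix.PosSemidef.sqrt_mul_self {𝕜 : Type*} [RCLike 𝕜] {A : Matrix n n 𝕜}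
    (hA : A.PosSemidef) : hA.sqrt * hA.sqrt = A := by
  rw [hA.sqrt_eq_cfcSqrt]
  exact CFC.sqrt_mul_sqrt_self A hA.nonneg

lemma Matrix.PosSemidef.posSemidef_sqrt {𝕜 : Type*} [RCLike 𝕜] {A : Matrix n n 𝕜}
    (hA : A.PosSemidef) : hA.sqrt.PosSemidef := by
  rw [hA.sqrt_eq_cfcSqrt, ← nonneg_iff_posSemidef]
  exact CFC.sqrt_nonneg A

lemma Matrix.PosDef.isUnit_sqrt {𝕜 : Type*} [RCLike 𝕜] {A : Matrix n n 𝕜} (hA : A.PosDef) :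
    IsUnit hA.posSemidef.sqrt := by
  rw [PosSemidef.sqrt_eq_cfcSqrt, CFC.isUnit_sqrt_iff A hA.posSemidef.nonneg]
  exact hA.isUnit

lemma Matrix.PosDef.sqrt_inv {𝕜 : Type*} [RCLike 𝕜] {A : Matrix n n 𝕜} (hA : A.PosDef) :
    hA.inv.posSemidef.sqrt = hA.posSemidef.sqrt⁻¹ := by
  rw [PosSemidef.sqrt_eq_cfcSqrt, PosSemidef.sqrt_eq_cfcSqrt, nonsing_inv_eq_ringInverse,
    nonsing_inv_eq_ringInverse, CFC.sqrt_ringInverse]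

lemma matAbs_eq_cfcAbs (A : Matrix n n ℂ) : matAbs A = CFC.abs A :=
  (posSemidef_conjTranspose_mul_self A).sqrt_eq_cfcSqrt

lemma matAbs_smul (c : ℂ) (A : Matrix n n ℂ) : matAbs (c • A) = ‖c‖ • matAbs A := by
  simp only [matAbs_eq_cfcAbs, CFC.abs_smul]

lemma Matrix.IsHermitian.posSemidef_matAbs_sub {A : Matrix n n ℂ} (hA : A.IsHermitian) :
    (matAbs A - A).PosSemidef := by
  rw [← nonneg_iff_posSemidef, matAbs_eq_cfcAbs, CFC.abs_sub_self A hA.isSelfAdjoint]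
  exact smul_nonneg zero_le_two (CFC.negPart_nonneg A)

end MatrixOrder

section IsRealMat

variable {l m n : Type*}

lemma isRealMat_iff_map_conj {A : Matrix m n ℂ} :
    IsRealMat A ↔ A.map (starRingEnd ℂ) = A := by
  simp only [IsRealMat, ← Matrix.ext_iff, Matrix.map_apply, Complex.conj_eq_iff_im]

lemma isRealMat_reM (A : Matrix m n ℂ) : IsRealMat (reM A) :=
  fun _ _ => Complex.ofReal_im _

lemma isRealMat_imM (A : Matrix m n ℂ) : IsRealMat (imM A) :=
  fun _ _ => Complex.ofReal_im _

lemma IsRealMat.add {A B : Matrix m n ℂ} (hA : IsRealMat A) (hB : IsRealMat B) :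
    IsRealMat (A + B) :=
  fun i j => by simp [hA i j, hB i j]

lemma IsRealMat.conjTranspose {A : Matrix m n ℂ} (hA : IsRealMat A) : IsRealMat Aᴴ :=
  fun i j => by simp [hA j i]

lemma IsRealMat.mul [Fintype m] {A : Matrix l m ℂ} {B : Matrix m n ℂ}
    (hA : IsRealMat A) (hB : IsRealMat B) : IsRealMat (A * B) := by
  rw [isRealMat_iff_map_conj] at hA hB ⊢
  rw [Matrix.map_mul, hA, hB]

lemma IsRealMat.inv [Fintype n] [DecidableEq n] {A : Matrix n n ℂ} (hA : IsRealMat A) :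
    IsRealMat A⁻¹ := by
  by_cases hdet : IsUnit A.det
  · rw [isRealMat_iff_map_conj] at hA ⊢
    have : A⁻¹.map (starRingEnd ℂ) * A.map (starRingEnd ℂ) = 1 := by
      rw [← Matrix.map_mul, nonsing_inv_mul A hdet, Matrix.map_one _ (map_zero _) (map_one _)]
    rw [hA] at this
    exact (inv_eq_left_inv this).symm
  · rw [nonsing_inv_apply_not_isUnit A hdet]
    exact fun _ _ => rfl

open scoped MatrixOrder in
lemma IsRealMat.sqrt [Fintype n] [DecidableEq n] {A : Matrix n n ℂ} (hA : A.PosSemidef)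
    (hreal : IsRealMat A) : IsRealMat hA.sqrt := by
  rw [isRealMat_iff_map_conj] at hreal ⊢
  rw [hA.sqrt_eq_cfcSqrt]
  have hS : (CFC.sqrt A).PosSemidef := nonneg_iff_posSemidef.mp (CFC.sqrt_nonneg A)
  have hconj : (CFC.sqrt A).map (starRingEnd ℂ) = (CFC.sqrt A)ᵀ := by
    ext i j
    rw [map_apply, transpose_apply, ← hS.isHermitian.apply]
    simp
  refine (CFC.sqrt_unique ?_ ?_).symm
  · rw [← Matrix.map_mul, CFC.sqrt_mul_sqrt_self A hA.nonneg, hreal]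
  · rw [hconj, nonneg_iff_posSemidef]
    exact hS.transpose

lemma IsRealMat.matAbs [Fintype n] [DecidableEq n] {A : Matrix n n ℂ} (hA : IsRealMat A) :
    IsRealMat (matAbs A) :=
  (hA.conjTranspose.mul hA).sqrt _

end IsRealMat

lemma reM_add_I_smul_imM {m n : Type*} (A : Matrix m n ℂ) : reM A + Complex.I • imM A = A := by
  ext i j
  simp only [reM, imM, Matrix.add_apply, Matrix.smul_apply, smul_eq_mul]
  exact mul_comm Complex.I _ ▸ Complex.re_add_im (A i j)

lemma isHermitian_reM {n : Type*} {A : Matrix n n ℂ} (hA : A.IsHermitian) :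
    (reM A).IsHermitian := by
  ext i j
  simp [reM, ← hA.apply i j]

lemma posSemidef_reM_add_conj_matAbs_sub {n : Type*} [Fintype n] [DecidableEq n]
    {J s : Matrix n n ℂ} (hJ : J.IsHermitian) (hs : IsUnit s) (hsH : s.IsHermitian) :
    (reM J + s⁻¹ * matAbs (s * imM J * s) * s⁻¹ - J).PosSemidef := by
  have hsdet : IsUnit s.det := (isUnit_iff_isUnit_det s).mp hs
  have hIm : Complex.I • imM J = J - reM J := eq_sub_of_add_eq' (reM_add_I_smul_imM J)
  set H := s * (Complex.I • imM J) * s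
  have hH : H.IsHermitian := by
    simpa only [H, hsH.eq] using
      isHermitian_mul_mul_conjTranspose s (hIm ▸ hJ.sub (isHermitian_reM hJ))
  have habs : matAbs H = matAbs (s * imM J * s) := by
    rw [show H = Complex.I • (s * imM J * s) by simp [H], matAbs_smul, Complex.norm_I, one_smul]
  have hconj : s⁻¹ * H * s⁻¹ = J - reM J := by
    simp only [H, ← hIm, mul_assoc, mul_nonsing_inv _ hsdet, mul_one,
      nonsing_inv_mul_cancel_left (h := hsdet)]
  have hdiff :
      reM J + s⁻¹ * matAbs (s * imM J * s) * s⁻¹ - J = s⁻¹ * (matAbs H - H) * s⁻¹ := by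
    rw [mul_sub, sub_mul, hconj, habs]
    abel
  rw [hdiff]
  simpa only [conjTranspose_nonsing_inv, hsH.eq] using
    hH.posSemidef_matAbs_sub.mul_mul_conjTranspose_same s⁻¹

/-- The matrix `V₀ = Re J + √(G⁻¹) |√G (Im J) √G| √(G⁻¹)` is real symmetric, satisfies
`V₀ ≥ J` in the Loewner order, and `Tr(G V₀) = Tr(G Re J) + Tr|√G (Im J) √G|`. -/
theorem optimal_real_majorant {d : ℕ} (J G : Matrix (Fin d) (Fin d) ℂ)
    (hJ : J.PosSemidef) (hG : G.PosDef) (hGreal : IsRealMat G) :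
    let s := hG.posSemidef.sqrt
    let sInv := (hG.inv).posSemidef.sqrt
    let V₀ := reM J + sInv * matAbs (s * imM J * s) * sInv
    IsRealMat V₀ ∧ V₀.IsHermitian ∧ (V₀ - J).PosSemidef ∧
      Matrix.trace (G * V₀) =
        Matrix.trace (G * reM J) + Matrix.trace (matAbs (s * imM J * s)) := by
  intro s sInv V₀
  have hsInv : sInv = s⁻¹ := hG.sqrt_inv
  have hs : IsUnit s := hG.isUnit_sqrt
  have hsdet : IsUnit s.det := (isUnit_iff_isUnit_det s).mp hs
  have hpsd : (V₀ - J).PosSemidef := by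
    simpa only [V₀, hsInv] using posSemidef_reM_add_conj_matAbs_sub hJ.isHermitian hs
      hG.posSemidef.posSemidef_sqrt.isHermitian
  refine ⟨?_, by simpa using hpsd.isHermitian.add hJ.isHermitian, hpsd, ?_⟩
  · have hsReal : IsRealMat s := IsRealMat.sqrt _ hGreal
    have hsInvReal : IsRealMat sInv := hsInv ▸ hsReal.inv
    exact (isRealMat_reM J).add
      ((hsInvReal.mul ((hsReal.mul (isRealMat_imM J)).mul hsReal).matAbs).mul hsInvReal)
  · have hGs : G = s * s := hG.posSemidef.sqrt_mul_self.symm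
    simp only [V₀, mul_add, trace_add, add_right_inj]
    calc trace (G * (sInv * matAbs (s * imM J * s) * sInv))
        = trace (s * matAbs (s * imM J * s) * s⁻¹) := by
          simp only [hGs, hsInv, mul_assoc, mul_nonsing_inv_cancel_left (h := hsdet)]
      _ = trace (matAbs (s * imM J * s)) := trace_conj hs _
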